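/- In weighted A* with heuristic inflation factor w ≥ 1 and a consistent heuristic h, when a vertex s is selected for expansion (i.e., it has minimal key g(s)+w·h(s) in the open list), its g-value satisfies g(s) ≤ w · g*(s), where g*(s) is the optimal cost from the start to s. Formally: if every vertex on some optimal path to s that is not yet expanded has key at least g(s)+w·h(s), then g(s) ≤ w·g*(s). -/

import Mathlib

/-!
Let `pᵢ` be the first vertex of the optimal path that is not yet expanded (or `s` itself if
there is none). Its predecessors are all expanded, so relaxing their edges gives
`g pᵢ ≤ g* pᵢ`. Consistency makes `g* + h` nondecreasing along an optimal path, so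
`h pᵢ ≤ g* s - g* pᵢ + h s`. Minimality of the key of `s` then gives
`g s ≤ g pᵢ + w (h pᵢ - h s) ≤ w g* s - (w - 1) g* pᵢ ≤ w g* s`.
-/

open Set

theorem Nat.monotoneOn_Iic_of_le_add_one {α : Type*} [Preorder α] {f : ℕ → α} {n : ℕ}
    (hf : ∀ k < n, f k ≤ f (k + 1)) : MonotoneOn f (Iic n) :=
  monotoneOn_of_le_succ ordConnected_Iic fun k _ _ hk ↦ by
    simpa using hf k (by simpa [Order.succ_eq_add_one, Nat.add_one_le_iff] using hk)

theorem Nat.exists_le_forall_lt_and_eq_or_not (P : ℕ → Prop) (n : ℕ) :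
    ∃ i ≤ n, (∀ k < i, P k) ∧ (i = n ∨ ¬ P i) := by
  classical
  have hex : ∃ i, i = n ∨ ¬ P i := ⟨n, .inl rfl⟩
  refine ⟨Nat.find hex, Nat.find_min' hex (.inl rfl), fun k hk ↦ ?_, Nat.find_spec hex⟩
  by_contra hPk
  exact Nat.find_min hex hk (.inr hPk)

section OptimalPath

variable {V : Type*} {E : V → V → Prop} {c : V → V → ℝ} {gstar : V → ℝ} {n : ℕ} {p : ℕ → V}

theorem g_le_gstar_of_forall_lt_mem_expanded {g : V → ℝ} {Expanded : Set V}
    (h_edge : ∀ i < n, E (p i) (p (i + 1)))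
    (h_opt : ∀ i < n, gstar (p (i + 1)) = gstar (p i) + c (p i) (p (i + 1)))
    (h_inv : ∀ u ∈ Expanded, ∀ v, E u v → g v ≤ g u + c u v)
    (h_start : g (p 0) ≤ gstar (p 0)) {j : ℕ} (hjn : j ≤ n)
    (h_prefix : ∀ k < j, p k ∈ Expanded) : g (p j) ≤ gstar (p j) := by
  have h_anti : AntitoneOn (fun k ↦ g (p k) - gstar (p k)) (Iic j) :=
    Nat.monotoneOn_Iic_of_le_add_one (α := ℝᵒᵈ) fun k hk ↦ by
      have h_relax := h_inv _ (h_prefix k hk) _ (h_edge k (hk.trans_le hjn))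
      have h_cost := h_opt k (hk.trans_le hjn)
      change g (p (k + 1)) - gstar (p (k + 1)) ≤ g (p k) - gstar (p k)
      linarith
  have h_drop : g (p j) - gstar (p j) ≤ g (p 0) - gstar (p 0) :=
    h_anti (Nat.zero_le j) (le_refl j) (Nat.zero_le j)
  linarith

theorem gstar_add_h_monotoneOn_of_consistent {h : V → ℝ}
    (h_cons : ∀ u v, E u v → h u ≤ c u v + h v)
    (h_edge : ∀ i < n, E (p i) (p (i + 1)))
    (h_opt : ∀ i < n, gstar (p (i + 1)) = gstar (p i) + c (p i) (p (i + 1))) :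
    MonotoneOn (fun k ↦ gstar (p k) + h (p k)) (Iic n) :=
  Nat.monotoneOn_Iic_of_le_add_one fun k hk ↦ by
    have h_cons_k := h_cons _ _ (h_edge k hk)
    simp only [h_opt k hk]
    linarith

end OptimalPath

theorem weightedAstar_expansion_bound_general
    (E : V → V → Prop) (c : V → V → ℝ) (g gstar h : V → ℝ) (w : ℝ)
    (s0 s : V) (Expanded : Set V) (n : ℕ) (p : ℕ → V)
    (hw : 1 ≤ w)
    (h_cons : ∀ u v, E u v → h u ≤ c u v + h v)
    -- `p` is an optimal path from `s0` to `s`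
    (hp0 : p 0 = s0) (hpn : p n = s)
    (h_edge : ∀ i < n, E (p i) (p (i + 1)))
    (hgstar0 : gstar s0 = 0)
    (hgstar_nonneg : ∀ v, 0 ≤ gstar v)
    (h_opt : ∀ i < n, gstar (p (i + 1)) = gstar (p i) + c (p i) (p (i + 1)))
    -- algorithm state
    (hg0 : g s0 = 0)
    (h_inv : ∀ u ∈ Expanded, ∀ v, E u v → g v ≤ g u + c u v)
    -- `s` has minimal key among open vertices on the path
    (h_key : ∀ i ≤ n, p i ∉ Expanded → g s + w * h s ≤ g (p i) + w * h (p i)) :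
    g s ≤ w * gstar s := by
  obtain ⟨i, hin, h_prefix, h_end⟩ :=
    Nat.exists_le_forall_lt_and_eq_or_not (fun k ↦ p k ∈ Expanded) n
  have hg_i : g (p i) ≤ gstar (p i) :=
    g_le_gstar_of_forall_lt_mem_expanded h_edge h_opt h_inv (by rw [hp0, hg0, hgstar0]) hin
      h_prefix
  have hkey_i : g s + w * h s ≤ g (p i) + w * h (p i) := by
    rcases h_end with rfl | h_open
    · rw [hpn]
    · exact h_key i hin h_open
  have hf_i : gstar (p i) + h (p i) ≤ gstar s + h s :=
    hpn ▸ gstar_add_h_monotoneOn_of_consistent h_cons h_edge h_opt hin (le_refl n) hin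
  calc g s ≤ g (p i) + w * (h (p i) - h s) := by linarith
    _ ≤ gstar (p i) + w * (gstar s - gstar (p i)) := 
      add_le_add hg_i (mul_le_mul_of_nonneg_left (by linarith) (by linarith))
    _ = w * gstar s - (w - 1) * gstar (p i) := by ring
    _ ≤ w * gstar s := sub_le_self _ (mul_nonneg (by linarith) (hgstar_nonneg _))

/-- In weighted A* with inflation `w ≥ 1` and consistent heuristic `h`: when `s` is
selected for expansion (every not-yet-expanded vertex on some optimal path to `s`
has key at least `g s + w * h s`), its `g`-value satisfies `g s ≤ w * g* s`. -/
theorem weightedAstar_expansion_bound [Fintype V]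
    (E : V → V → Prop) (c : V → V → ℝ) (g gstar h : V → ℝ) (w : ℝ)
    (s0 s : V) (Expanded : Set V) (n : ℕ) (p : ℕ → V)
    (hw : 1 ≤ w)
    (hh_nonneg : ∀ v, 0 ≤ h v)
    (hc_nonneg : ∀ u v, E u v → 0 ≤ c u v)
    (h_cons : ∀ u v, E u v → h u ≤ c u v + h v)
    -- `p` is an optimal path from `s0` to `s`
    (hp0 : p 0 = s0) (hpn : p n = s)
    (h_edge : ∀ i < n, E (p i) (p (i + 1)))
    (hgstar0 : gstar s0 = 0)
    (hgstar_nonneg : ∀ v, 0 ≤ gstar v)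
    (h_opt : ∀ i < n, gstar (p (i + 1)) = gstar (p i) + c (p i) (p (i + 1)))
    -- algorithm state
    (hg0 : g s0 = 0)
    (hs0_exp : s0 ∈ Expanded)
    (h_inv : ∀ u ∈ Expanded, ∀ v, E u v → g v ≤ g u + c u v)
    -- `s` has minimal key among open vertices on the path
    (h_key : ∀ i ≤ n, p i ∉ Expanded → g s + w * h s ≤ g (p i) + w * h (p i)) :
    g s ≤ w * gstar s :=
  weightedAstar_expansion_bound_general E c g gstar h w s0 s Expanded n p hw h_cons hp0 hpn h_edge
    hgstar0 hgstar_nonneg h_opt hg0 h_inv h_key
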